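/- Let G be a Class 2 simple graph with maximum degree Δ, let e = v₀v₁ ∈ E(G) be a critical edge, and let φ ∈ C^Δ(G−e). If K=(v₀, v₀v₁, v₁, v₁v₂, v₂, v₂v₃, v₃) is a Kierstead path with respect to e and φ, then |φ̄(v₃) ∩ (φ̄(v₀) ∪ φ̄(v₁))| ≤ 1. -/

import Mathlib

/-- `c` is a proper edge coloring of `G` using colors in `{1, …, k}`:
every edge gets a color in `[1,k]`, and distinct edges sharing an endpoint
get distinct colors. -/
def IsEdgeColoring {V : Type*} (G : SimpleGraph V) (k : ℕ) (c : Sym2 V → ℕ) : Prop :=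
  (∀ e ∈ G.edgeSet, 1 ≤ c e ∧ c e ≤ k) ∧
    ∀ e ∈ G.edgeSet, ∀ f ∈ G.edgeSet, e ≠ f → (∃ v, v ∈ e ∧ v ∈ f) → c e ≠ c f

/-- The chromatic index `χ'(G)`: the least `k` admitting a proper edge `k`-coloring. -/
noncomputable def chromIndex {V : Type*} (G : SimpleGraph V) : ℕ :=
  sInf {k | ∃ c, IsEdgeColoring G k c}

/-- An edge `e` of `G` is critical if `χ'(G-e) < χ'(G)`. -/
def IsCriticalEdge {V : Type*} (G : SimpleGraph V) (e : Sym2 V) : Prop :=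
  e ∈ G.edgeSet ∧ chromIndex (G.deleteEdges {e}) < chromIndex G

/-- The set of colors of `[1,k]` missing at `v` under the coloring `c` of `G`. -/
def missingColors {V : Type*} (G : SimpleGraph V) (k : ℕ) (c : Sym2 V → ℕ) (v : V) : Set ℕ :=
  {α | 1 ≤ α ∧ α ≤ k ∧ ∀ e ∈ G.edgeSet, v ∈ e → c e ≠ α}

/-- `G` is `Δ`-critical: `Δ` is the maximum degree of `G`, `χ'(G) = Δ+1`, and every
proper subgraph has chromatic index less than `Δ+1`. -/
def IsDeltaCritical {V : Type*} [Fintype V] (G : SimpleGraph V) [DecidableRel G.Adj]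
    (Δ : ℕ) : Prop :=
  G.maxDegree = Δ ∧ chromIndex G = Δ + 1 ∧
    ∀ H : SimpleGraph V, H ≤ G → H ≠ G → chromIndex H < Δ + 1

/-- A Kierstead path `(v₀, v₀v₁, v₁, …, v_{p-1}v_p, v_p)` with respect to the edge
`v₀v₁` and a `k`-coloring `c` of `G - v₀v₁`, encoded by the list `P = [v₀, …, v_p]`. -/
structure IsKiersteadPath {V : Type*} (G : SimpleGraph V) (k : ℕ) (c : Sym2 V → ℕ)
    (P : List V) : Prop where
  two_le : 2 ≤ P.length
  nodup : P.Nodup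
  adj : ∀ (i : ℕ) (h : i + 1 < P.length), G.Adj (P[i]'(by omega)) (P[i+1]'h)
  color : ∀ (i : ℕ) (h : i + 1 < P.length), 1 ≤ i →
      ∃ (j : ℕ) (_ : j ≤ i),
        c (s(P[i]'(by omega), P[i+1]'h)) ∈
          missingColors (G.deleteEdges {s(P[0]'(by omega), P[1]'(by omega))}) k c
            (P[j]'(by omega))

/-- A multifan centered at `r` with respect to the edge `r s₁` and a `k`-coloring `c` of
`G - r s₁`, encoded by `r` and the list `sl = [s₁, …, s_p]`. -/
structure IsMultifan {V : Type*} (G : SimpleGraph V) (k : ℕ) (c : Sym2 V → ℕ)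
    (r : V) (sl : List V) : Prop where
  one_le : 1 ≤ sl.length
  nodup : (r :: sl).Nodup
  adj : ∀ (i : ℕ) (h : i < sl.length), G.Adj r (sl[i]'h)
  color : ∀ (i : ℕ) (h : i < sl.length), 1 ≤ i →
      ∃ (j : ℕ) (_ : j < i),
        c (s(r, sl[i]'h)) ∈
          missingColors (G.deleteEdges {s(r, sl[0]'(by omega))}) k c
            (sl[j]'(by omega))

/-- The subgraph of `G` whose edges are the edges colored `α` or `β` by `c`;
its components are the `(α,β)`-chains. -/
def chainGraph {V : Type*} (G : SimpleGraph V) (c : Sym2 V → ℕ) (α β : ℕ) :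
    SimpleGraph V where
  Adj x y := G.Adj x y ∧ (c (s(x, y)) = α ∨ c (s(x, y)) = β)
  symm := by
    constructor
    intro x y hxy
    refine ⟨hxy.1.symm, ?_⟩
    rw [Sym2.eq_swap]
    exact hxy.2
  loopless := ⟨fun x hx => G.loopless.irrefl x hx.1⟩

/-- `x` and `y` are `(α,β)`-linked with respect to the coloring `c` of `G`:
they belong to the same `(α,β)`-chain. -/
def Linked {V : Type*} (G : SimpleGraph V) (c : Sym2 V → ℕ) (α β : ℕ) (x y : V) : Prop :=
  (chainGraph G c α β).Reachable x y

/-!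
Write `φ̄` for missing colours, `γ₁ = φ(v₁v₂)` and `γ₂ = φ(v₂v₃)`. Since `G` is Class 2, no
colour is missing at both ends of `v₀v₁`; hence for `a ∈ φ̄(v₀)` and `b ∈ φ̄(v₁)` the
`(a,b)`-chain through `v₀` is a path ending at `v₁`, and any third vertex missing `a` or `b` lies
on a different chain, whose Kempe interchange does not affect `v₀` and `v₁`.

Recolouring `v₀v₁` with `γ₁` and uncolouring `v₁v₂` turns `v₁ v₂ v₃` into a fan, so when
`γ₂ ∈ φ̄(v₁)` the vertex `v₃` misses neither `γ₁` nor a colour of `φ̄(v₁)`. Each configuration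
in which two colours of `φ̄(v₀) ∪ φ̄(v₁)` are missing at `v₃` is carried by Kempe interchanges
at `v₃`, or along the `v₀`–`v₁` chain, into one contradicting this.
-/

open Finset

namespace SimpleGraph

variable {V : Type*} {G : SimpleGraph V}

theorem Connected.card_filter_degree_lt_two_le [Fintype V] [DecidableRel G.Adj]
    (hG : G.Connected) (hdeg : ∀ v, G.degree v ≤ 2) : #{v | G.degree v < 2} ≤ 2 := by
  classical
  have hE := hG.card_vert_le_card_edgeSet_add_one
  rw [Nat.card_eq_fintype_card, Nat.card_eq_fintype_card, ← edgeFinset_card] at hE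
  have hsum : ∑ v, G.degree v + #{v | G.degree v < 2} ≤ 2 * Fintype.card V :=
    calc ∑ v, G.degree v + #{v | G.degree v < 2}
        = ∑ v, (G.degree v + if G.degree v < 2 then 1 else 0) := by
          rw [card_filter, sum_add_distrib]
      _ ≤ ∑ _v : V, 2 := sum_le_sum fun v _ => by have := hdeg v; split_ifs <;> omega
      _ = 2 * Fintype.card V := by simp [mul_comm]
  rw [sum_degrees_eq_twice_card_edges] at hsum
  omega

theorem Reachable.not_reachable_of_degree_le_one [Fintype V] [DecidableRel G.Adj]
    (hdeg : ∀ v, G.degree v ≤ 2) {x y z : V} (hxy : x ≠ y) (hxz : x ≠ z) (hyz : y ≠ z)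
    (hx : G.degree x ≤ 1) (hy : G.degree y ≤ 1) (hz : G.degree z ≤ 1) (hr : G.Reachable x y) :
    ¬G.Reachable x z := by
  classical
  intro hr'
  let C := (G.connectedComponentMk x).supp
  have hmem {v : V} : v ∈ C ↔ G.Reachable x v := by
    simp [C, ConnectedComponent.eq, reachable_comm]
  have hdegC (v : C) : (G.induce C).degree v = G.degree v :=
    degree_induce_of_neighborSet_subset fun w hw =>
      hmem.2 ((hmem.1 v.2).trans (G.adj_symm hw).reachable.symm)
  have hconn : (G.induce C).Connected := (G.connectedComponentMk x).connected_toSimpleGraph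
  have hle := hconn.card_filter_degree_lt_two_le fun v => (hdegC v).trans_le (hdeg v)
  let S : Finset C := {⟨x, hmem.2 .rfl⟩, ⟨y, hmem.2 hr⟩, ⟨z, hmem.2 hr'⟩}
  have hS : S ⊆ ({v | (G.induce C).degree v < 2} : Finset C) := by
    simp only [S, insert_subset_iff, singleton_subset_iff, mem_filter, mem_univ, true_and, hdegC]
    omega
  have hS3 : #S = 3 := by
    simp [S, card_insert_of_notMem, hxy, hxz, hyz]
  have := card_le_card hS
  omega

theorem Adj.deleteEdges_of_notMem {u w x y : V} (h : G.Adj u w) (hw : w ∉ s(x, y)) :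
    (G.deleteEdges {s(x, y)}).Adj u w :=
  (deleteEdges_adj ..).2 ⟨h, fun he => hw (Set.mem_singleton_iff.1 he ▸ Sym2.mem_mk_right u w)⟩

theorem Adj.degree_deleteEdges_lt [Fintype V] [DecidableRel G.Adj] [DecidableEq V] {x y : V}
    (h : G.Adj x y) : (G.deleteEdges {s(x, y)}).degree y < G.degree y := by
  simp only [← card_neighborFinset_eq_degree]
  refine card_lt_card ((ssubset_iff_of_subset fun w hw => ?_).2 ⟨x, ?_, ?_⟩)
  · simp_all
  · simpa using h.symm
  · simp [Sym2.eq_swap]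

end SimpleGraph

section EdgeColoring

variable {V : Type*} {G H : SimpleGraph V} {k : ℕ} {c : Sym2 V → ℕ} {v w x y z : V} {δ : ℕ}

theorem chromIndex_le (hc : IsEdgeColoring G k c) : chromIndex G ≤ k := Nat.sInf_le ⟨c, hc⟩

theorem IsEdgeColoring.mono (hc : IsEdgeColoring G k c) (h : H ≤ G) : IsEdgeColoring H k c :=
  ⟨fun e he => hc.1 e (SimpleGraph.edgeSet_mono h he),
    fun e he f hf => hc.2 e (SimpleGraph.edgeSet_mono h he) f (SimpleGraph.edgeSet_mono h hf)⟩

theorem mem_missingColors : δ ∈ missingColors H k c v ↔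
    δ ∈ Set.Icc 1 k ∧ ∀ e ∈ H.edgeSet, v ∈ e → c e ≠ δ := by
  simp [missingColors, and_assoc]

theorem mem_Icc_of_mem_missingColors (h : δ ∈ missingColors H k c v) : δ ∈ Set.Icc 1 k :=
  ⟨h.1, h.2.1⟩

theorem missingColors_anti (h : H ≤ G) : missingColors G k c v ⊆ missingColors H k c v :=
  fun _ ⟨h1, h2, h3⟩ => ⟨h1, h2, fun e he => h3 e (SimpleGraph.edgeSet_mono h he)⟩

theorem ne_of_mem_missingColors (hδ : δ ∈ missingColors H k c v) (h : H.Adj v w) :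
    c s(v, w) ≠ δ :=
  hδ.2.2 _ h (Sym2.mem_mk_left _ _)

theorem ne_of_mem_missingColors' (hδ : δ ∈ missingColors H k c v) (h : H.Adj w v) :
    c s(w, v) ≠ δ :=
  hδ.2.2 _ h (Sym2.mem_mk_right _ _)

theorem IsEdgeColoring.ne_of_adj (hc : IsEdgeColoring H k c) (hw : H.Adj v w) (hx : H.Adj v x)
    (hwx : w ≠ x) : c s(v, w) ≠ c s(v, x) :=
  hc.2 _ hw _ hx (fun h => hwx (Sym2.congr_right.1 h))
    ⟨v, Sym2.mem_mk_left _ _, Sym2.mem_mk_left _ _⟩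

theorem IsEdgeColoring.update [DecidableEq V] (hc : IsEdgeColoring (G.deleteEdges {s(y, z)}) k c)
    (hy : δ ∈ missingColors (G.deleteEdges {s(y, z)}) k c y)
    (hz : δ ∈ missingColors (G.deleteEdges {s(y, z)}) k c z) :
    IsEdgeColoring G k (Function.update c s(y, z) δ) := by
  have hdel {e} (he : e ∈ G.edgeSet) (hne : e ≠ s(y, z)) :
      e ∈ (G.deleteEdges {s(y, z)}).edgeSet := by
    simp [SimpleGraph.edgeSet_deleteEdges, he, hne]
  have hmiss {e} (he : e ∈ G.edgeSet) (hne : e ≠ s(y, z)) {v} (hv : v ∈ s(y, z)) (hve : v ∈ e) :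
      c e ≠ δ := by
    rcases Sym2.mem_iff.1 hv with rfl | rfl
    exacts [hy.2.2 e (hdel he hne) hve, hz.2.2 e (hdel he hne) hve]
  refine ⟨fun e he => ?_, fun e he f hf hef ⟨v, hve, hvf⟩ => ?_⟩
  · rcases eq_or_ne e s(y, z) with rfl | hne
    · simpa using ⟨hy.1, hy.2.1⟩
    · simpa [hne] using hc.1 e (hdel he hne)
  · rcases eq_or_ne e s(y, z) with rfl | hne <;> rcases eq_or_ne f s(y, z) with rfl | hnf
    · exact absurd rfl hef
    · simpa [hnf] using (hmiss hf hnf hve hvf).symm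
    · simpa [hne] using hmiss he hne hvf hve
    · simpa [hne, hnf] using hc.2 e (hdel he hne) f (hdel hf hnf) hef ⟨v, hve, hvf⟩

theorem missingColors_update_of_notMem [DecidableEq V] {e : Sym2 V} (hv : v ∉ e) :
    missingColors H k (Function.update c e δ) v = missingColors H k c v := by
  ext γ
  refine and_congr_right' (and_congr_right' (forall₂_congr fun f _ => forall_congr' fun hvf => ?_))
  rw [Function.update_of_ne (ne_of_mem_of_not_mem' hvf hv)]

theorem IsEdgeColoring.mem_missingColors_update [DecidableEq V] (hc : IsEdgeColoring H k c)
    {e : Sym2 V} (he : e ∈ H.edgeSet) (hv : v ∈ e) (hδ : δ ∈ missingColors H k c v) :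
    c e ∈ missingColors H k (Function.update c e δ) v := by
  refine ⟨(hc.1 e he).1, (hc.1 e he).2, fun f hf hvf => ?_⟩
  rcases eq_or_ne f e with rfl | hne
  · simpa using (hδ.2.2 f hf hvf).symm
  · simpa [hne] using hc.2 f hf e he hne ⟨v, hvf, hv⟩

theorem IsEdgeColoring.mem_missingColors_deleteEdges {e : Sym2 V} (hc : IsEdgeColoring H k c)
    (he : e ∈ H.edgeSet) (hv : v ∈ e) :
    c e ∈ missingColors (H.deleteEdges {e}) k c v := by
  refine ⟨(hc.1 e he).1, (hc.1 e he).2, fun f hf hvf => ?_⟩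
  rw [SimpleGraph.edgeSet_deleteEdges] at hf
  exact hc.2 f hf.1 e he hf.2 ⟨v, hvf, hv⟩

theorem missingColors_nonempty_of_degree_lt [Fintype (H.neighborSet v)] (h : H.degree v < k) :
    (missingColors H k c v).Nonempty := by
  classical
  have hcard : #((H.neighborFinset v).image fun w => c s(v, w)) < #(Finset.Icc 1 k) := by
    simpa using Finset.card_image_le.trans_lt (h.trans_eq' (H.card_neighborFinset_eq_degree v))
  obtain ⟨δ, hδ, hδv⟩ := Finset.exists_mem_notMem_of_card_lt_card hcard
  rw [Finset.mem_Icc] at hδ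
  refine ⟨δ, hδ.1, hδ.2, fun e he hve hce => hδv ?_⟩
  obtain ⟨w, rfl⟩ := Sym2.mem_iff_exists.1 hve
  exact Finset.mem_image.2 ⟨w, (H.mem_neighborFinset v w).2 he, hce⟩

end EdgeColoring

section Kempe

open Equiv

variable {V : Type*} {H : SimpleGraph V} {k : ℕ} {c : Sym2 V → ℕ} {a b γ : ℕ} {u v w z : V}
  {e : Sym2 V}

theorem reachable_of_mem_of_reachable (he : e ∈ H.edgeSet) (hce : c e = a ∨ c e = b)
    (hu : u ∈ e) (hw : w ∈ e) (hr : (chainGraph H c a b).Reachable u z) :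
    (chainGraph H c a b).Reachable w z := by
  induction e using Sym2.ind with
  | _ p q =>
    have hpq : (chainGraph H c a b).Reachable p q := SimpleGraph.Adj.reachable ⟨he, hce⟩
    rcases Sym2.mem_iff.1 hu with rfl | rfl <;> rcases Sym2.mem_iff.1 hw with rfl | rfl
    exacts [hr, hpq.symm.trans hr, hpq.trans hr, hr]

open Classical in
/-- Since `swap a b` fixes every colour other than `a` and `b`, only the edges of the
`(a,b)`-chain through `z` change colour. -/
noncomputable def kempeChange (H : SimpleGraph V) (c : Sym2 V → ℕ) (a b : ℕ) (z : V) :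
    Sym2 V → ℕ :=
  fun e => if ∃ v ∈ e, (chainGraph H c a b).Reachable v z then swap a b (c e) else c e

theorem kempeChange_of_reachable (hv : v ∈ e) (hr : (chainGraph H c a b).Reachable v z) :
    kempeChange H c a b z e = swap a b (c e) :=
  if_pos ⟨v, hv, hr⟩

theorem kempeChange_of_not_reachable (he : e ∈ H.edgeSet) (hv : v ∈ e)
    (hr : ¬(chainGraph H c a b).Reachable v z) : kempeChange H c a b z e = c e := by
  unfold kempeChange
  split_ifs with h
  · obtain ⟨u, hu, hru⟩ := h
    by_cases hce : c e = a ∨ c e = b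
    · exact absurd (reachable_of_mem_of_reachable he hce hu hv hru) hr
    · exact swap_apply_of_ne_of_ne (not_or.1 hce).1 (not_or.1 hce).2
  · rfl

theorem kempeChange_eq_or (H : SimpleGraph V) (c : Sym2 V → ℕ) (a b : ℕ) (z : V) (e : Sym2 V) :
    kempeChange H c a b z e = c e ∨ kempeChange H c a b z e = swap a b (c e) := by
  unfold kempeChange
  split_ifs <;> simp

theorem kempeChange_of_ne (ha : c e ≠ a) (hb : c e ≠ b) : kempeChange H c a b z e = c e := by
  rcases kempeChange_eq_or H c a b z e with h | h
  · exact h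
  · rw [h, swap_apply_of_ne_of_ne ha hb]

theorem swap_mem_Icc (ha : a ∈ Set.Icc 1 k) (hb : b ∈ Set.Icc 1 k) (hγ : γ ∈ Set.Icc 1 k) :
    swap a b γ ∈ Set.Icc 1 k := by
  rw [swap_apply_def]
  split_ifs <;> assumption

theorem IsEdgeColoring.kempeChange (hc : IsEdgeColoring H k c) (ha : a ∈ Set.Icc 1 k)
    (hb : b ∈ Set.Icc 1 k) : IsEdgeColoring H k (kempeChange H c a b z) := by
  refine ⟨fun e he => ?_, fun e he f hf hef ⟨v, hve, hvf⟩ => ?_⟩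
  · rcases kempeChange_eq_or H c a b z e with h | h
    · exact h ▸ hc.1 e he
    · exact h ▸ swap_mem_Icc ha hb (hc.1 e he)
  · have hne := hc.2 e he f hf hef ⟨v, hve, hvf⟩
    by_cases hr : (chainGraph H c a b).Reachable v z
    · rw [kempeChange_of_reachable hve hr, kempeChange_of_reachable hvf hr]
      exact (swap a b).injective.ne hne
    · rwa [kempeChange_of_not_reachable he hve hr, kempeChange_of_not_reachable hf hvf hr]

theorem missingColors_kempeChange_of_not_reachable (hr : ¬(chainGraph H c a b).Reachable v z) :
    missingColors H k (kempeChange H c a b z) v = missingColors H k c v := by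
  ext γ
  refine and_congr_right' (and_congr_right' (forall₂_congr fun e he => forall_congr' fun hve => ?_))
  rw [kempeChange_of_not_reachable he hve hr]

theorem mem_missingColors_kempeChange_of_reachable (ha : a ∈ Set.Icc 1 k) (hb : b ∈ Set.Icc 1 k)
    (hr : (chainGraph H c a b).Reachable v z) :
    γ ∈ missingColors H k (kempeChange H c a b z) v ↔ swap a b γ ∈ missingColors H k c v := by
  have hedges : (∀ e ∈ H.edgeSet, v ∈ e → kempeChange H c a b z e ≠ γ) ↔
      ∀ e ∈ H.edgeSet, v ∈ e → c e ≠ swap a b γ :=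
    forall₂_congr fun e _ => forall_congr' fun hve => by
      rw [kempeChange_of_reachable hve hr, Ne, swap_apply_eq_iff]
  have hrange : γ ∈ Set.Icc 1 k ↔ swap a b γ ∈ Set.Icc 1 k :=
    ⟨swap_mem_Icc ha hb, fun h => swap_apply_self a b γ ▸ swap_mem_Icc ha hb h⟩
  rw [mem_missingColors, mem_missingColors, hedges, hrange]

theorem mem_missingColors_kempeChange_of_ne (ha : γ ≠ a) (hb : γ ≠ b) :
    γ ∈ missingColors H k (kempeChange H c a b z) v ↔ γ ∈ missingColors H k c v := by
  refine and_congr_right' (and_congr_right' (forall₂_congr fun e he => forall_congr' fun hve => ?_))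
  rcases kempeChange_eq_or H c a b z e with h | h
  · rw [h]
  · rw [h, Ne, swap_apply_eq_iff, swap_apply_of_ne_of_ne ha hb]

end Kempe

section ChainGraph

variable {V : Type*} {H : SimpleGraph V} {k : ℕ} {c : Sym2 V → ℕ} {a b : ℕ} {v : V}

theorem IsEdgeColoring.degree_chainGraph_le (hc : IsEdgeColoring H k c)
    [Fintype ((chainGraph H c a b).neighborSet v)] {S : Finset ℕ}
    (hS : ∀ w, H.Adj v w → (c s(v, w) = a ∨ c s(v, w) = b) → c s(v, w) ∈ S) :
    (chainGraph H c a b).degree v ≤ #S := by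
  rw [← SimpleGraph.card_neighborFinset_eq_degree]
  refine Finset.card_le_card_of_injOn (fun w => c s(v, w)) (fun w hw => ?_) fun w hw w' hw' h => ?_
  · have hw := (SimpleGraph.mem_neighborFinset _ _ _).1 hw
    exact hS w hw.1 hw.2
  · by_contra hne
    exact hc.ne_of_adj ((SimpleGraph.mem_neighborFinset _ _ _).1 hw).1
      ((SimpleGraph.mem_neighborFinset _ _ _).1 hw').1 hne h

theorem IsEdgeColoring.degree_chainGraph_le_two (hc : IsEdgeColoring H k c)
    [Fintype ((chainGraph H c a b).neighborSet v)] : (chainGraph H c a b).degree v ≤ 2 :=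
  (hc.degree_chainGraph_le (S := {a, b}) fun _ _ h => by simpa using h).trans Finset.card_le_two

theorem IsEdgeColoring.degree_chainGraph_le_one (hc : IsEdgeColoring H k c)
    [Fintype ((chainGraph H c a b).neighborSet v)]
    (hv : a ∈ missingColors H k c v ∨ b ∈ missingColors H k c v) :
    (chainGraph H c a b).degree v ≤ 1 := by
  rcases hv with hv | hv
  · refine (hc.degree_chainGraph_le (S := {b}) fun w hw h => ?_).trans_eq (Finset.card_singleton _)
    simpa using h.resolve_left (ne_of_mem_missingColors hv hw)
  · refine (hc.degree_chainGraph_le (S := {a}) fun w hw h => ?_).trans_eq (Finset.card_singleton _)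
    simpa using h.resolve_right (ne_of_mem_missingColors hv hw)

end ChainGraph

section Critical

open Equiv

variable {V : Type*} {G : SimpleGraph V} {k : ℕ} {c : Sym2 V → ℕ} {a b : ℕ} {x y z : V}

theorem disjoint_missingColors_of_chromIndex_eq (hG : chromIndex G = k + 1)
    (hc : IsEdgeColoring (G.deleteEdges {s(x, y)}) k c) :
    Disjoint (missingColors (G.deleteEdges {s(x, y)}) k c x)
      (missingColors (G.deleteEdges {s(x, y)}) k c y) := by
  classical
  refine Set.disjoint_left.2 fun _ hx hy => ?_
  have := chromIndex_le (hc.update hx hy)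
  omega

theorem missingColors_nonempty_of_maxDegree_le [Fintype V] [DecidableRel G.Adj]
    (hΔ : G.maxDegree ≤ k) (h : G.Adj x y) (c : Sym2 V → ℕ) :
    (missingColors (G.deleteEdges {s(x, y)}) k c y).Nonempty := by
  classical
  exact missingColors_nonempty_of_degree_lt
    (h.degree_deleteEdges_lt.trans_le ((G.degree_le_maxDegree y).trans hΔ))

theorem reachable_chainGraph_of_mem_missingColors (hG : chromIndex G = k + 1)
    (hc : IsEdgeColoring (G.deleteEdges {s(x, y)}) k c)
    (ha : a ∈ missingColors (G.deleteEdges {s(x, y)}) k c x)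
    (hb : b ∈ missingColors (G.deleteEdges {s(x, y)}) k c y) :
    (chainGraph (G.deleteEdges {s(x, y)}) c a b).Reachable x y := by
  by_contra hr
  set H := G.deleteEdges {s(x, y)}
  have ha' := mem_Icc_of_mem_missingColors ha
  have hb' := mem_Icc_of_mem_missingColors hb
  have hbx : b ∈ missingColors H k (kempeChange H c a b x) x :=
    (mem_missingColors_kempeChange_of_reachable ha' hb' .rfl).2 (by rwa [swap_apply_right])
  have hby : b ∈ missingColors H k (kempeChange H c a b x) y := by
    rwa [missingColors_kempeChange_of_not_reachable fun h => hr h.symm]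
  exact Set.disjoint_left.1
    (disjoint_missingColors_of_chromIndex_eq hG (hc.kempeChange ha' hb')) hbx hby

theorem not_reachable_chainGraph_of_mem_missingColors [Fintype V] (hG : chromIndex G = k + 1)
    (hc : IsEdgeColoring (G.deleteEdges {s(x, y)}) k c)
    (ha : a ∈ missingColors (G.deleteEdges {s(x, y)}) k c x)
    (hb : b ∈ missingColors (G.deleteEdges {s(x, y)}) k c y) (hzx : z ≠ x) (hzy : z ≠ y)
    (hz : a ∈ missingColors (G.deleteEdges {s(x, y)}) k c z ∨
      b ∈ missingColors (G.deleteEdges {s(x, y)}) k c z) :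
    ¬(chainGraph (G.deleteEdges {s(x, y)}) c a b).Reachable x z ∧
      ¬(chainGraph (G.deleteEdges {s(x, y)}) c a b).Reachable y z := by
  classical
  have hr := reachable_chainGraph_of_mem_missingColors hG hc ha hb
  have hxy : x ≠ y := fun h =>
    Set.disjoint_left.1 (disjoint_missingColors_of_chromIndex_eq hG hc) ha (h ▸ ha)
  have hxz := hr.not_reachable_of_degree_le_one (fun _ => hc.degree_chainGraph_le_two) hxy
    hzx.symm hzy.symm (hc.degree_chainGraph_le_one (.inl ha))
    (hc.degree_chainGraph_le_one (.inr hb)) (hc.degree_chainGraph_le_one hz)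
  exact ⟨hxz, fun h => hxz (hr.trans h)⟩

end Critical

section Fan

open Equiv

variable {V : Type*} {G : SimpleGraph V} {k : ℕ} {c : Sym2 V → ℕ} {x y z : V}

theorem disjoint_missingColors_center_of_fan (hG : chromIndex G = k + 1) (hxy : x ≠ y)
    (hyz : G.Adj y z) (hzx : z ≠ x) (hc : IsEdgeColoring (G.deleteEdges {s(x, y)}) k c)
    (hγ : c s(y, z) ∈ missingColors (G.deleteEdges {s(x, y)}) k c x) :
    Disjoint (missingColors (G.deleteEdges {s(x, y)}) k c y)
      (missingColors (G.deleteEdges {s(x, y)}) k c z) := by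
  classical
  set H := G.deleteEdges {s(x, y)}
  refine Set.disjoint_left.2 fun δ hy hz => ?_
  have hyzH : H.Adj y z := hyz.deleteEdges_of_notMem (by simp [hzx, hyz.ne.symm])
  have hle := H.deleteEdges_le {s(y, z)}
  have hc' : IsEdgeColoring H k (Function.update c s(y, z) δ) :=
    (hc.mono hle).update (missingColors_anti hle hy) (missingColors_anti hle hz)
  have hx : c s(y, z) ∈ missingColors H k (Function.update c s(y, z) δ) x := by
    rwa [missingColors_update_of_notMem (by simp [hxy, hzx.symm])]
  exact Set.disjoint_left.1 (disjoint_missingColors_of_chromIndex_eq hG hc') hx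
    (hc.mem_missingColors_update hyzH (Sym2.mem_mk_left _ _) hy)

theorem disjoint_missingColors_of_fan [Fintype V] [DecidableRel G.Adj] (hΔ : G.maxDegree ≤ k)
    (hG : chromIndex G = k + 1) (hxy : G.Adj x y) (hyz : G.Adj y z) (hzx : z ≠ x)
    (hc : IsEdgeColoring (G.deleteEdges {s(x, y)}) k c)
    (hγ : c s(y, z) ∈ missingColors (G.deleteEdges {s(x, y)}) k c x) :
    Disjoint (missingColors (G.deleteEdges {s(x, y)}) k c z)
      (missingColors (G.deleteEdges {s(x, y)}) k c x ∪
        missingColors (G.deleteEdges {s(x, y)}) k c y) := by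
  set H := G.deleteEdges {s(x, y)}
  refine Set.disjoint_union_right.2 ⟨Set.disjoint_left.2 fun δ hz hx => ?_,
    (disjoint_missingColors_center_of_fan hG hxy.ne hyz hzx hc hγ).symm⟩
  obtain ⟨τ, hτ⟩ := missingColors_nonempty_of_maxDegree_le hΔ hxy c
  obtain ⟨hrx, hry⟩ :=
    not_reachable_chainGraph_of_mem_missingColors hG hc hx hτ hzx hyz.ne.symm (.inl hz)
  have hδ' := mem_Icc_of_mem_missingColors hx
  have hτ' := mem_Icc_of_mem_missingColors hτ
  have hyzH : H.Adj y z := hyz.deleteEdges_of_notMem (by simp [hzx, hyz.ne.symm])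
  have hyz' : kempeChange H c δ τ z s(y, z) = c s(y, z) :=
    kempeChange_of_ne (ne_of_mem_missingColors' hz hyzH) (ne_of_mem_missingColors hτ hyzH)
  have hτy : τ ∈ missingColors H k (kempeChange H c δ τ z) y := by
    rwa [missingColors_kempeChange_of_not_reachable hry]
  have hτz : τ ∈ missingColors H k (kempeChange H c δ τ z) z :=
    (mem_missingColors_kempeChange_of_reachable hδ' hτ' .rfl).2 (by rwa [swap_apply_right])
  refine Set.disjoint_left.1 (disjoint_missingColors_center_of_fan hG hxy.ne hyz hzx
    (hc.kempeChange hδ' hτ') ?_) hτy hτz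
  rwa [hyz', missingColors_kempeChange_of_not_reachable hrx]

end Fan

section Shift

variable {V : Type*} [DecidableEq V] {G : SimpleGraph V} {k : ℕ} {c : Sym2 V → ℕ} {v x y z : V}

theorem IsEdgeColoring.shift (hyz : G.Adj y z) (hzx : z ≠ x)
    (hc : IsEdgeColoring (G.deleteEdges {s(x, y)}) k c)
    (hγ : c s(y, z) ∈ missingColors (G.deleteEdges {s(x, y)}) k c x) :
    IsEdgeColoring (G.deleteEdges {s(y, z)}) k (Function.update c s(x, y) (c s(y, z))) := by
  have hcomm : (G.deleteEdges {s(y, z)}).deleteEdges {s(x, y)} =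
      (G.deleteEdges {s(x, y)}).deleteEdges {s(y, z)} := by
    simp only [SimpleGraph.deleteEdges_deleteEdges, Set.union_comm]
  have hle : (G.deleteEdges {s(y, z)}).deleteEdges {s(x, y)} ≤ G.deleteEdges {s(x, y)} :=
    hcomm ▸ SimpleGraph.deleteEdges_le _
  have hyzH : s(y, z) ∈ (G.deleteEdges {s(x, y)}).edgeSet :=
    hyz.deleteEdges_of_notMem (by simp [hzx, hyz.ne.symm])
  refine (hc.mono hle).update (missingColors_anti hle hγ) ?_
  rw [hcomm]
  exact hc.mem_missingColors_deleteEdges hyzH (Sym2.mem_mk_left _ _)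

theorem missingColors_subset_shift (hyz : G.Adj y z) (hzx : z ≠ x) (hv : v ≠ x) :
    missingColors (G.deleteEdges {s(x, y)}) k c v ⊆
      missingColors (G.deleteEdges {s(y, z)}) k (Function.update c s(x, y) (c s(y, z))) v := by
  intro γ hγ
  refine ⟨hγ.1, hγ.2.1, fun e he hve => ?_⟩
  rcases eq_or_ne e s(x, y) with rfl | hne
  · obtain rfl : v = y := (Sym2.mem_iff.1 hve).resolve_left hv
    simpa using ne_of_mem_missingColors hγ
      (hyz.deleteEdges_of_notMem (by simp [hzx, hyz.ne.symm]))
  · rw [Function.update_of_ne hne]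
    refine hγ.2.2 e ?_ hve
    simp_all [SimpleGraph.edgeSet_deleteEdges]

theorem IsEdgeColoring.mem_missingColors_shift (hyz : G.Adj y z) (hzx : z ≠ x)
    (hc : IsEdgeColoring (G.deleteEdges {s(x, y)}) k c) :
    c s(y, z) ∈
      missingColors (G.deleteEdges {s(y, z)}) k (Function.update c s(x, y) (c s(y, z))) z := by
  have hz : z ∉ s(x, y) := by simp [hzx, hyz.ne.symm]
  have hyzH : s(y, z) ∈ (G.deleteEdges {s(x, y)}).edgeSet := hyz.deleteEdges_of_notMem hz
  refine ⟨(hc.1 _ hyzH).1, (hc.1 _ hyzH).2, fun e he hze => ?_⟩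
  have hne : e ≠ s(x, y) := ne_of_mem_of_not_mem' hze hz
  rw [Function.update_of_ne hne]
  rw [SimpleGraph.edgeSet_deleteEdges] at he
  refine hc.2 e ?_ _ hyzH he.2 ⟨z, hze, Sym2.mem_mk_right _ _⟩
  simp_all [SimpleGraph.edgeSet_deleteEdges]

end Shift

structure IsPath4 {V : Type*} (G : SimpleGraph V) (v₀ v₁ v₂ v₃ : V) : Prop where
  adj₀₁ : G.Adj v₀ v₁
  adj₁₂ : G.Adj v₁ v₂
  adj₂₃ : G.Adj v₂ v₃
  ne₀₂ : v₀ ≠ v₂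
  ne₀₃ : v₀ ≠ v₃
  ne₁₃ : v₁ ≠ v₃

namespace IsPath4

open Equiv

variable {V : Type*} {G : SimpleGraph V} {k : ℕ} {c : Sym2 V → ℕ} {v₀ v₁ v₂ v₃ : V} {a b : ℕ}

local notation "H₀" => G.deleteEdges {s(v₀, v₁)}
local notation "φ̄" => missingColors (G.deleteEdges {s(v₀, v₁)}) k

theorem notMem₂ (hP : IsPath4 G v₀ v₁ v₂ v₃) : v₂ ∉ s(v₀, v₁) := by
  simp [hP.ne₀₂.symm, hP.adj₁₂.ne.symm]

theorem adj₁₂_deleteEdges (hP : IsPath4 G v₀ v₁ v₂ v₃) : (H₀).Adj v₁ v₂ :=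
  hP.adj₁₂.deleteEdges_of_notMem hP.notMem₂

theorem adj₂₃_deleteEdges (hP : IsPath4 G v₀ v₁ v₂ v₃) : (H₀).Adj v₂ v₃ :=
  (hP.adj₂₃.symm.deleteEdges_of_notMem hP.notMem₂).symm

theorem color_ne (hP : IsPath4 G v₀ v₁ v₂ v₃) (hc : IsEdgeColoring (H₀) k c) :
    c s(v₁, v₂) ≠ c s(v₂, v₃) := by
  rw [Sym2.eq_swap]
  exact hc.ne_of_adj hP.adj₁₂_deleteEdges.symm hP.adj₂₃_deleteEdges hP.ne₁₃

variable [Fintype V] [DecidableRel G.Adj]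

theorem disjoint_missingColors_insert (hP : IsPath4 G v₀ v₁ v₂ v₃) (hΔ : G.maxDegree ≤ k)
    (hG : chromIndex G = k + 1) (hc : IsEdgeColoring (H₀) k c)
    (hγ₁ : c s(v₁, v₂) ∈ φ̄ c v₀) (hγ₂ : c s(v₂, v₃) ∈ φ̄ c v₁) :
    Disjoint (φ̄ c v₃) (insert (c s(v₁, v₂)) (φ̄ c v₁)) := by
  classical
  have hshift {v : V} (hv : v ≠ v₀) :=
    missingColors_subset_shift (c := c) (k := k) hP.adj₁₂ hP.ne₀₂.symm hv
  have h₂₃ : Function.update c s(v₀, v₁) (c s(v₁, v₂)) s(v₂, v₃) = c s(v₂, v₃) :=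
    Function.update_of_ne (ne_of_mem_of_not_mem' (Sym2.mem_mk_left _ _) hP.notMem₂) _ _
  have hfan := disjoint_missingColors_of_fan hΔ hG hP.adj₁₂ hP.adj₂₃ hP.ne₁₃.symm
    (hc.shift hP.adj₁₂ hP.ne₀₂.symm hγ₁) (h₂₃ ▸ hshift hP.adj₀₁.ne.symm hγ₂)
  refine hfan.mono (hshift hP.ne₀₃.symm) (Set.insert_subset_iff.2 ⟨Or.inr ?_, fun δ h => Or.inl ?_⟩)
  · exact hc.mem_missingColors_shift hP.adj₁₂ hP.ne₀₂.symm
  · exact hshift hP.adj₀₁.ne.symm h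

theorem color_notMem_missingColors (hP : IsPath4 G v₀ v₁ v₂ v₃) (hΔ : G.maxDegree ≤ k)
    (hG : chromIndex G = k + 1) (hc : IsEdgeColoring (H₀) k c)
    (hγ₁ : c s(v₁, v₂) ∈ φ̄ c v₀) (hγ₂ : c s(v₂, v₃) ∈ φ̄ c v₀) (hb₁ : b ∈ φ̄ c v₁)
    (hb₃ : b ∈ φ̄ c v₃) : c s(v₁, v₂) ∉ φ̄ c v₃ := by
  intro hγ₁₃
  obtain ⟨hr₀, hr₁⟩ := not_reachable_chainGraph_of_mem_missingColors hG hc hγ₂ hb₁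
    hP.ne₀₃.symm hP.ne₁₃.symm (.inr hb₃)
  have hγ₂' := mem_Icc_of_mem_missingColors hγ₂
  have hb' := mem_Icc_of_mem_missingColors hb₁
  set c' := kempeChange (H₀) c (c s(v₂, v₃)) b v₃
  have h₁₂ : c' s(v₁, v₂) = c s(v₁, v₂) :=
    kempeChange_of_not_reachable hP.adj₁₂_deleteEdges (Sym2.mem_mk_left _ _) hr₁
  have h₂₃ : c' s(v₂, v₃) = b :=
    (kempeChange_of_reachable (Sym2.mem_mk_right _ _) .rfl).trans (swap_apply_left _ _)
  have hm₀ : φ̄ c' v₀ = φ̄ c v₀ := missingColors_kempeChange_of_not_reachable hr₀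
  have hm₁ : φ̄ c' v₁ = φ̄ c v₁ := missingColors_kempeChange_of_not_reachable hr₁
  have hγ₁₃' : c' s(v₁, v₂) ∈ φ̄ c' v₃ := h₁₂ ▸ (mem_missingColors_kempeChange_of_ne
    (hP.color_ne hc) (ne_of_mem_missingColors hb₁ hP.adj₁₂_deleteEdges)).2 hγ₁₃
  have hc' : IsEdgeColoring (H₀) k c' := hc.kempeChange hγ₂' hb'
  refine Set.disjoint_left.1 (hP.disjoint_missingColors_insert hΔ hG hc' ?_ ?_)
    hγ₁₃' (Set.mem_insert _ _)
  · rwa [h₁₂, hm₀]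
  · rwa [h₂₃, hm₁]

theorem inter_subset_singleton_of_mem (hP : IsPath4 G v₀ v₁ v₂ v₃) (hΔ : G.maxDegree ≤ k)
    (hG : chromIndex G = k + 1) (hc : IsEdgeColoring (H₀) k c)
    (hγ₁₀ : c s(v₁, v₂) ∈ φ̄ c v₀) (hγ₁₃ : c s(v₁, v₂) ∈ φ̄ c v₃) (hγ₂ : c s(v₂, v₃) ∈ φ̄ c v₀) :
    φ̄ c v₃ ∩ φ̄ c v₀ ⊆ {c s(v₁, v₂)} := by
  rintro a ⟨ha₃, ha₀⟩
  by_contra haγ₁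
  obtain ⟨g, hg⟩ := missingColors_nonempty_of_maxDegree_le hΔ hP.adj₀₁ c
  obtain ⟨hr₀, hr₁⟩ := not_reachable_chainGraph_of_mem_missingColors hG hc ha₀ hg
    hP.ne₀₃.symm hP.ne₁₃.symm (.inl ha₃)
  have ha' := mem_Icc_of_mem_missingColors ha₀
  have hg' := mem_Icc_of_mem_missingColors hg
  have hdisj := disjoint_missingColors_of_chromIndex_eq hG hc
  set c' := kempeChange (H₀) c a g v₃
  have h₁₂ : c' s(v₁, v₂) = c s(v₁, v₂) :=
    kempeChange_of_not_reachable hP.adj₁₂_deleteEdges (Sym2.mem_mk_left _ _) hr₁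
  have h₂₃ : c' s(v₂, v₃) = c s(v₂, v₃) := kempeChange_of_ne
    (ne_of_mem_missingColors' ha₃ hP.adj₂₃_deleteEdges) (hdisj.ne_of_mem hγ₂ hg)
  have hm₀ : φ̄ c' v₀ = φ̄ c v₀ := missingColors_kempeChange_of_not_reachable hr₀
  have hm₁ : φ̄ c' v₁ = φ̄ c v₁ := missingColors_kempeChange_of_not_reachable hr₁
  have hg₃ : g ∈ φ̄ c' v₃ :=
    (mem_missingColors_kempeChange_of_reachable ha' hg' .rfl).2 (by rwa [swap_apply_right])
  have hγ₁₃' : c' s(v₁, v₂) ∈ φ̄ c' v₃ := h₁₂ ▸ (mem_missingColors_kempeChange_of_ne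
    (Ne.symm haγ₁) (ne_of_mem_missingColors hg hP.adj₁₂_deleteEdges)).2 hγ₁₃
  have hc' : IsEdgeColoring (H₀) k c' := hc.kempeChange ha' hg'
  refine hP.color_notMem_missingColors hΔ hG hc' ?_ ?_ (hm₁ ▸ hg) hg₃ hγ₁₃'
  · rwa [h₁₂, hm₀]
  · rwa [h₂₃, hm₀]

theorem disjoint_missingColors_of_mem (hP : IsPath4 G v₀ v₁ v₂ v₃) (hΔ : G.maxDegree ≤ k)
    (hG : chromIndex G = k + 1) (hc : IsEdgeColoring (H₀) k c)
    (hγ₁ : c s(v₁, v₂) ∈ φ̄ c v₀) (hγ₂ : c s(v₂, v₃) ∈ φ̄ c v₀) (ha₀ : a ∈ φ̄ c v₀)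
    (ha₃ : a ∈ φ̄ c v₃) : Disjoint (φ̄ c v₃) (φ̄ c v₁) := by
  refine Set.disjoint_left.2 fun b hb₃ hb₁ => ?_
  have hdisj := disjoint_missingColors_of_chromIndex_eq hG hc
  have hab : a ≠ b := hdisj.ne_of_mem ha₀ hb₁
  have haγ₁ : a ≠ c s(v₁, v₂) :=
    ne_of_mem_of_not_mem ha₃ (hP.color_notMem_missingColors hΔ hG hc hγ₁ hγ₂ hb₁ hb₃)
  have hγ₁b : c s(v₁, v₂) ≠ b := ne_of_mem_missingColors hb₁ hP.adj₁₂_deleteEdges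
  have hγ₂b : c s(v₂, v₃) ≠ b := ne_of_mem_missingColors' hb₃ hP.adj₂₃_deleteEdges
  obtain ⟨hr₀, -⟩ := not_reachable_chainGraph_of_mem_missingColors hG hc hγ₁ hb₁
    hP.ne₀₃.symm hP.ne₁₃.symm (.inr hb₃)
  have hr₁ := reachable_chainGraph_of_mem_missingColors hG hc hγ₁ hb₁
  have hγ₁' := mem_Icc_of_mem_missingColors hγ₁
  have hb' := mem_Icc_of_mem_missingColors hb₁
  -- Interchanging along the `v₀`–`v₁` chain gives `v₁v₂` the colour `b`, missing at `v₃`.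
  set c' := kempeChange (H₀) c (c s(v₁, v₂)) b v₀
  have hc' : IsEdgeColoring (H₀) k c' := hc.kempeChange hγ₁' hb'
  have h₁₂ : c' s(v₁, v₂) = b :=
    (kempeChange_of_reachable (Sym2.mem_mk_left _ _) hr₁.symm).trans (swap_apply_left _ _)
  have h₂₃ : c' s(v₂, v₃) = c s(v₂, v₃) :=
    kempeChange_of_not_reachable hP.adj₂₃_deleteEdges (Sym2.mem_mk_right _ _) fun h => hr₀ h.symm
  have hm₃ : φ̄ c' v₃ = φ̄ c v₃ := missingColors_kempeChange_of_not_reachable fun h => hr₀ h.symm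
  have hb₀' : c' s(v₁, v₂) ∈ φ̄ c' v₀ := h₁₂ ▸
    (mem_missingColors_kempeChange_of_reachable hγ₁' hb' .rfl).2 (by rwa [swap_apply_right])
  have hγ₂' : c' s(v₂, v₃) ∈ φ̄ c' v₀ :=
    h₂₃ ▸ (mem_missingColors_kempeChange_of_ne (hP.color_ne hc).symm hγ₂b).2 hγ₂
  have ha₀' : a ∈ φ̄ c' v₀ := (mem_missingColors_kempeChange_of_ne haγ₁ hab).2 ha₀
  have hsub := hP.inter_subset_singleton_of_mem hΔ hG hc' hb₀' (by rw [h₁₂, hm₃]; exact hb₃) hγ₂'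
  exact hab (h₁₂ ▸ hsub ⟨hm₃ ▸ ha₃, ha₀'⟩)

theorem subsingleton_inter_zero (hP : IsPath4 G v₀ v₁ v₂ v₃) (hΔ : G.maxDegree ≤ k)
    (hG : chromIndex G = k + 1) (hc : IsEdgeColoring (H₀) k c)
    (hγ₁ : c s(v₁, v₂) ∈ φ̄ c v₀) (hγ₂ : c s(v₂, v₃) ∈ φ̄ c v₀) :
    (φ̄ c v₃ ∩ φ̄ c v₀).Subsingleton := by
  rintro α ⟨hα₃, hα₀⟩ β ⟨hβ₃, hβ₀⟩
  by_contra hαβ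
  obtain ⟨τ, hτ⟩ := missingColors_nonempty_of_maxDegree_le hΔ hP.adj₀₁ c
  have hdisj := disjoint_missingColors_of_chromIndex_eq hG hc
  obtain ⟨hr₀, hr₁⟩ := not_reachable_chainGraph_of_mem_missingColors hG hc hα₀ hτ
    hP.ne₀₃.symm hP.ne₁₃.symm (.inl hα₃)
  have hα' := mem_Icc_of_mem_missingColors hα₀
  have hτ' := mem_Icc_of_mem_missingColors hτ
  set c' := kempeChange (H₀) c α τ v₃
  have hc' : IsEdgeColoring (H₀) k c' := hc.kempeChange hα' hτ'
  have h₁₂ : c' s(v₁, v₂) = c s(v₁, v₂) :=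
    kempeChange_of_not_reachable hP.adj₁₂_deleteEdges (Sym2.mem_mk_left _ _) hr₁
  have h₂₃ : c' s(v₂, v₃) = c s(v₂, v₃) := kempeChange_of_ne
    (ne_of_mem_missingColors' hα₃ hP.adj₂₃_deleteEdges) (hdisj.ne_of_mem hγ₂ hτ)
  have hm₀ : φ̄ c' v₀ = φ̄ c v₀ := missingColors_kempeChange_of_not_reachable hr₀
  have hm₁ : φ̄ c' v₁ = φ̄ c v₁ := missingColors_kempeChange_of_not_reachable hr₁
  have hτ₃ : τ ∈ φ̄ c' v₃ :=
    (mem_missingColors_kempeChange_of_reachable hα' hτ' .rfl).2 (by rwa [swap_apply_right])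
  have hβ₃' : β ∈ φ̄ c' v₃ :=
    (mem_missingColors_kempeChange_of_ne (Ne.symm hαβ) (hdisj.ne_of_mem hβ₀ hτ)).2 hβ₃
  refine Set.disjoint_left.1 (hP.disjoint_missingColors_of_mem hΔ hG hc' ?_ ?_ (hm₀ ▸ hβ₀) hβ₃')
    hτ₃ (hm₁ ▸ hτ)
  · rwa [h₁₂, hm₀]
  · rwa [h₂₃, hm₀]

theorem subsingleton_inter_one (hP : IsPath4 G v₀ v₁ v₂ v₃) (hΔ : G.maxDegree ≤ k)
    (hG : chromIndex G = k + 1) (hc : IsEdgeColoring (H₀) k c)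
    (hγ₁ : c s(v₁, v₂) ∈ φ̄ c v₀) (hγ₂ : c s(v₂, v₃) ∈ φ̄ c v₀) :
    (φ̄ c v₃ ∩ φ̄ c v₁).Subsingleton := by
  rintro α ⟨hα₃, hα₁⟩ β ⟨hβ₃, hβ₁⟩
  by_contra hαβ
  obtain ⟨hr₀, hr₁⟩ := not_reachable_chainGraph_of_mem_missingColors hG hc hγ₂ hβ₁
    hP.ne₀₃.symm hP.ne₁₃.symm (.inr hβ₃)
  set c' := kempeChange (H₀) c (c s(v₂, v₃)) β v₃
  have hc' : IsEdgeColoring (H₀) k c' :=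
    hc.kempeChange (mem_Icc_of_mem_missingColors hγ₂) (mem_Icc_of_mem_missingColors hβ₁)
  have h₁₂ : c' s(v₁, v₂) = c s(v₁, v₂) :=
    kempeChange_of_not_reachable hP.adj₁₂_deleteEdges (Sym2.mem_mk_left _ _) hr₁
  have h₂₃ : c' s(v₂, v₃) = β :=
    (kempeChange_of_reachable (Sym2.mem_mk_right _ _) .rfl).trans (swap_apply_left _ _)
  have hm₀ : φ̄ c' v₀ = φ̄ c v₀ := missingColors_kempeChange_of_not_reachable hr₀
  have hm₁ : φ̄ c' v₁ = φ̄ c v₁ := missingColors_kempeChange_of_not_reachable hr₁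
  have hα₃' : α ∈ φ̄ c' v₃ := (mem_missingColors_kempeChange_of_ne
    (ne_of_mem_missingColors' hα₃ hP.adj₂₃_deleteEdges).symm hαβ).2 hα₃
  refine Set.disjoint_left.1 (hP.disjoint_missingColors_insert hΔ hG hc' ?_ ?_) hα₃'
    (Set.mem_insert_of_mem _ (hm₁ ▸ hα₁))
  · rwa [h₁₂, hm₀]
  · rwa [h₂₃, hm₁]

theorem subsingleton_of_mem_zero (hP : IsPath4 G v₀ v₁ v₂ v₃) (hΔ : G.maxDegree ≤ k)
    (hG : chromIndex G = k + 1) (hc : IsEdgeColoring (H₀) k c)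
    (hγ₁ : c s(v₁, v₂) ∈ φ̄ c v₀) (hγ₂ : c s(v₂, v₃) ∈ φ̄ c v₀) :
    (φ̄ c v₃ ∩ (φ̄ c v₀ ∪ φ̄ c v₁)).Subsingleton := by
  have hmix {α β : ℕ} (hα₀ : α ∈ φ̄ c v₀) (hα₃ : α ∈ φ̄ c v₃) (hβ₁ : β ∈ φ̄ c v₁)
      (hβ₃ : β ∈ φ̄ c v₃) : α = β :=
    absurd hβ₁ (Set.disjoint_left.1 (hP.disjoint_missingColors_of_mem hΔ hG hc hγ₁ hγ₂ hα₀ hα₃) hβ₃)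
  rintro α ⟨hα₃, hα₀ | hα₁⟩ β ⟨hβ₃, hβ₀ | hβ₁⟩
  · exact hP.subsingleton_inter_zero hΔ hG hc hγ₁ hγ₂ ⟨hα₃, hα₀⟩ ⟨hβ₃, hβ₀⟩
  · exact hmix hα₀ hα₃ hβ₁ hβ₃
  · exact (hmix hβ₀ hβ₃ hα₁ hα₃).symm
  · exact hP.subsingleton_inter_one hΔ hG hc hγ₁ hγ₂ ⟨hα₃, hα₁⟩ ⟨hβ₃, hβ₁⟩

theorem subsingleton_of_mem_one (hP : IsPath4 G v₀ v₁ v₂ v₃) (hΔ : G.maxDegree ≤ k)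
    (hG : chromIndex G = k + 1) (hc : IsEdgeColoring (H₀) k c)
    (hγ₁ : c s(v₁, v₂) ∈ φ̄ c v₀) (hγ₂ : c s(v₂, v₃) ∈ φ̄ c v₁) :
    (φ̄ c v₃ ∩ (φ̄ c v₀ ∪ φ̄ c v₁)).Subsingleton := by
  have hins := hP.disjoint_missingColors_insert hΔ hG hc hγ₁ hγ₂
  have h₀ {δ : ℕ} (h : δ ∈ φ̄ c v₃ ∩ (φ̄ c v₀ ∪ φ̄ c v₁)) : δ ∈ φ̄ c v₀ :=
    h.2.resolve_right fun h₁ => Set.disjoint_left.1 hins h.1 (Set.mem_insert_of_mem _ h₁)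
  intro α hα β hβ
  by_contra hαβ
  obtain ⟨hr₀, hr₁⟩ := not_reachable_chainGraph_of_mem_missingColors hG hc (h₀ hα) hγ₂
    hP.ne₀₃.symm hP.ne₁₃.symm (.inl hα.1)
  have hα' := mem_Icc_of_mem_missingColors hα.1
  have hγ₂' := mem_Icc_of_mem_missingColors hγ₂
  set c' := kempeChange (H₀) c α (c s(v₂, v₃)) v₃
  have hc' : IsEdgeColoring (H₀) k c' := hc.kempeChange hα' hγ₂'
  have h₁₂ : c' s(v₁, v₂) = c s(v₁, v₂) :=
    kempeChange_of_not_reachable hP.adj₁₂_deleteEdges (Sym2.mem_mk_left _ _) hr₁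
  have h₂₃ : c' s(v₂, v₃) = α :=
    (kempeChange_of_reachable (Sym2.mem_mk_right _ _) .rfl).trans (swap_apply_right _ _)
  have hm₀ : φ̄ c' v₀ = φ̄ c v₀ := missingColors_kempeChange_of_not_reachable hr₀
  have hm₁ : φ̄ c' v₁ = φ̄ c v₁ := missingColors_kempeChange_of_not_reachable hr₁
  have hγ₂₃ : c s(v₂, v₃) ∈ φ̄ c' v₃ := (mem_missingColors_kempeChange_of_reachable hα' hγ₂' .rfl).2
    (by rw [swap_apply_right]; exact hα.1)
  have hβ₃ : β ∈ φ̄ c' v₃ := (mem_missingColors_kempeChange_of_ne (Ne.symm hαβ)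
    (ne_of_mem_missingColors' hβ.1 hP.adj₂₃_deleteEdges).symm).2 hβ.1
  refine Set.disjoint_left.1 (hP.disjoint_missingColors_of_mem hΔ hG hc' ?_ ?_ (hm₀ ▸ h₀ hβ) hβ₃)
    hγ₂₃ (hm₁ ▸ hγ₂)
  · rwa [h₁₂, hm₀]
  · rw [h₂₃, hm₀]
    exact h₀ hα

end IsPath4

namespace IsKiersteadPath

variable {V : Type*} {G : SimpleGraph V} {k : ℕ} {c : Sym2 V → ℕ} {v₀ v₁ v₂ v₃ : V}

theorem isPath4 (hK : IsKiersteadPath G k c [v₀, v₁, v₂, v₃]) : IsPath4 G v₀ v₁ v₂ v₃ := by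
  have h := hK.nodup
  simp only [List.nodup_cons, List.mem_cons, List.not_mem_nil, or_false, not_or] at h
  exact ⟨hK.adj 0 (by simp), hK.adj 1 (by simp), hK.adj 2 (by simp), h.1.2.1, h.1.2.2, h.2.1.2⟩

theorem color_one (hK : IsKiersteadPath G k c [v₀, v₁, v₂, v₃]) :
    c s(v₁, v₂) ∈ missingColors (G.deleteEdges {s(v₀, v₁)}) k c v₀ := by
  obtain ⟨j, hj, hmem⟩ := hK.color 1 (by simp) le_rfl
  interval_cases j
  · simpa using hmem
  · exact absurd rfl (ne_of_mem_missingColors hmem hK.isPath4.adj₁₂_deleteEdges)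

theorem color_two (hK : IsKiersteadPath G k c [v₀, v₁, v₂, v₃]) :
    c s(v₂, v₃) ∈ missingColors (G.deleteEdges {s(v₀, v₁)}) k c v₀ ∪
      missingColors (G.deleteEdges {s(v₀, v₁)}) k c v₁ := by
  obtain ⟨j, hj, hmem⟩ := hK.color 2 (by simp) (by norm_num)
  interval_cases j
  · exact .inl (by simpa using hmem)
  · exact .inr (by simpa using hmem)
  · exact absurd rfl (ne_of_mem_missingColors hmem hK.isPath4.adj₂₃_deleteEdges)

end IsKiersteadPath

theorem kierstead_path_four_missing_bound_general
    {V : Type*} [Fintype V]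
    (Δ : ℕ) (G : SimpleGraph V) [DecidableRel G.Adj]
    (hΔ : G.maxDegree = Δ) (hclass2 : chromIndex G = Δ + 1)
    (v₀ v₁ v₂ v₃ : V)
    (φ : Sym2 V → ℕ)
    (hφ : IsEdgeColoring (G.deleteEdges {s(v₀, v₁)}) Δ φ)
    (hK : IsKiersteadPath G Δ φ [v₀, v₁, v₂, v₃]) :
    (missingColors (G.deleteEdges {s(v₀, v₁)}) Δ φ v₃ ∩
      (missingColors (G.deleteEdges {s(v₀, v₁)}) Δ φ v₀ ∪
        missingColors (G.deleteEdges {s(v₀, v₁)}) Δ φ v₁)).ncard ≤ 1 := by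
  have hsub : (missingColors (G.deleteEdges {s(v₀, v₁)}) Δ φ v₃ ∩
      (missingColors (G.deleteEdges {s(v₀, v₁)}) Δ φ v₀ ∪
        missingColors (G.deleteEdges {s(v₀, v₁)}) Δ φ v₁)).Subsingleton := by
    rcases hK.color_two with hγ₂ | hγ₂
    · exact hK.isPath4.subsingleton_of_mem_zero hΔ.le hclass2 hφ hK.color_one hγ₂
    · exact hK.isPath4.subsingleton_of_mem_one hΔ.le hclass2 hφ hK.color_one hγ₂
  exact (Set.ncard_le_one hsub.finite).2 hsub

/-- Let `G` be a Class 2 graph with maximum degree `Δ`, `e = v₀v₁` a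
critical edge, and `φ ∈ C^Δ(G-e)`. If `K = (v₀, v₀v₁, v₁, v₁v₂, v₂, v₂v₃, v₃)` is a
Kierstead path with respect to `e` and `φ`, then `|φ̄(v₃) ∩ (φ̄(v₀) ∪ φ̄(v₁))| ≤ 1`. -/
theorem kierstead_path_four_missing_bound
    {V : Type*} [Fintype V] [DecidableEq V]
    (Δ : ℕ) (G : SimpleGraph V) [DecidableRel G.Adj]
    (hΔ : G.maxDegree = Δ) (hclass2 : chromIndex G = Δ + 1)
    (v₀ v₁ v₂ v₃ : V)
    (hcrit : IsCriticalEdge G (s(v₀, v₁)))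
    (φ : Sym2 V → ℕ)
    (hφ : IsEdgeColoring (G.deleteEdges {s(v₀, v₁)}) Δ φ)
    (hK : IsKiersteadPath G Δ φ [v₀, v₁, v₂, v₃]) :
    (missingColors (G.deleteEdges {s(v₀, v₁)}) Δ φ v₃ ∩
      (missingColors (G.deleteEdges {s(v₀, v₁)}) Δ φ v₀ ∪
        missingColors (G.deleteEdges {s(v₀, v₁)}) Δ φ v₁)).ncard ≤ 1 :=
  kierstead_path_four_missing_bound_general Δ G hΔ hclass2 v₀ v₁ v₂ v₃ φ hφ hK
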